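/- Let F_q be a finite field, a ∈ F_q^× an element of multiplicative order at least n, and let r be an integer with 0 ≤ r < n. Set G(z) = Σ_{i=0}^{r} z^i · ( 1, a^i, a^{2i}, …, a^{(n−1)i} ) ∈ F_q[z]^n. Then G(z) is a basic generator matrix of the one-dimensional convolutional code C = F_q(z)·G(z) ⊆ F_q(z)^n, C has degree r, and the free distance of C equals n(r+1); hence C is an MDS convolutional code with parameters (n, 1, r). -/

import Mathlib

open Polynomial Finset

/-- The vector of rational functions obtained from a vector of polynomials. -/
noncomputable def liftVec {F : Type*} [Field F] {n : ℕ} (x : Fin n → Polynomial F) :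
    Fin n → RatFunc F :=
  fun i => algebraMap (Polynomial F) (RatFunc F) (x i)

/-- The weight of a polynomial vector `x(z) = Σ_t x_t z^t` is `Σ_t w_H(x_t)`. -/
noncomputable def polyWeight {F : Type*} [Field F] [DecidableEq F] {n : ℕ}
    (x : Fin n → Polynomial F) : ℕ :=
  ∑ t ∈ Finset.range ((Finset.univ.sup fun i => (x i).natDegree) + 1),
    hammingNorm (fun i => (x i).coeff t)

/-! Lagrange interpolation at the distinct nodes `a ^ k` gives constants `c k` with
`∑ k, c k • G k = 1`. This Bezout identity makes `G` basic (the quotient is torsion free over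
the PID `F[z]`) and forces every polynomial codeword to be `q • G` with `q` a polynomial.

For `x = q • G`, the coefficient of `z ^ t` in `x k` is `P_t(a ^ k)`, where `P_t` has
coefficients `q_t, q_(t-1), …, q_(t-r)`. If the window `[t - r, t]` meets `supp q`, then
`P_t ≠ 0` and its number of nonzero roots is at most `deg P_t - ord_0 P_t`, which is the number
of positions `j` lying between two points of `supp q` in the window; otherwise all `n`
coordinates vanish. Each position `j` between the lowest and highest exponents `v ≤ m` of `q`
is bridged at most `r < n` times, and never when the window ending at `j + r + 1` is empty, to
which that empty window is charged. So at most `n (m - v)` of the `n (m + r + 1 - v)` coordinates at times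
`v, …, m + r` vanish, and the weight is at least `n (r + 1)`. -/

section

variable {F : Type*} [Field F]

theorem exists_sum_mul_pow_eq_zero_pow {n r : ℕ} (hrn : r < n) {b : Fin n → F}
    (hb : Function.Injective b) :
    ∃ c : Fin n → F, ∀ i ≤ r, ∑ k, c k * b k ^ i = 0 ^ i := by
  classical
  -- `c k = Lₖ(0)` for the Lagrange basis `Lₖ` at the nodes `b`: interpolate `X ^ i` at `0`
  refine ⟨fun k => (Lagrange.basis univ b k).eval 0, fun i hi => ?_⟩
  have hdeg : (X ^ i : F[X]).degree < #(univ : Finset (Fin n)) := by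
    rw [degree_X_pow, card_univ, Fintype.card_fin]
    exact_mod_cast hi.trans_lt hrn
  have := congrArg (eval 0) (Lagrange.eq_interpolate hb.injOn hdeg)
  simpa [Lagrange.interpolate_apply, eval_finsetSum, mul_comm] using this.symm

theorem Module.free_quotient_span_singleton_of_eq_one {R M : Type*} [CommRing R] [IsDomain R]
    [IsPrincipalIdealRing R] [AddCommGroup M] [Module R M] [Module.Finite R M]
    [Module.IsTorsionFree R M] {v : M} (φ : M →ₗ[R] R) (hv : φ v = 1) :
    Module.Free R (M ⧸ R ∙ v) := by
  -- `x ↦ x - φ x • v` has kernel `R ∙ v`, so the quotient embeds into `M`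
  let ψ : M →ₗ[R] M := LinearMap.id - LinearMap.toSpanSingleton R M v ∘ₗ φ
  have hker : R ∙ v = LinearMap.ker ψ := by
    ext x
    simp only [Submodule.mem_span_singleton, LinearMap.mem_ker, ψ, LinearMap.sub_apply,
      LinearMap.id_apply, LinearMap.comp_apply, LinearMap.toSpanSingleton_apply, sub_eq_zero]
    constructor
    · rintro ⟨s, rfl⟩
      simp [hv]
    · exact fun h => ⟨φ x, h.symm⟩
  have : Module.IsTorsionFree R (M ⧸ R ∙ v) :=
    (LinearMap.ker_eq_bot.1 (Submodule.ker_liftQ_eq_bot' _ ψ hker)).moduleIsTorsionFree _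
      (map_smul _)
  infer_instance

theorem eq_smul_of_liftVec_mem_span {n : ℕ} {G x : Fin n → F[X]} {c : Fin n → F[X]}
    (hc : ∑ k, c k * G k = 1) (hx : liftVec x ∈ Submodule.span (RatFunc F) {liftVec G}) :
    x = (∑ k, c k * x k) • G := by
  obtain ⟨f, hf⟩ := Submodule.mem_span_singleton.1 hx
  have hxk (k : Fin n) :
      algebraMap F[X] (RatFunc F) (x k) = f * algebraMap F[X] (RatFunc F) (G k) :=
    (congrFun hf k).symm
  have hq : algebraMap F[X] (RatFunc F) (∑ k, c k * x k) = f := by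
    simp only [map_sum, map_mul, hxk, mul_left_comm _ f, ← mul_sum]
    simp only [← map_mul, ← map_sum, hc, map_one, mul_one]
  funext k
  apply RatFunc.algebraMap_injective F
  rw [hxk, Pi.smul_apply, smul_eq_mul, map_mul, hq]

-- The paper's `G(z)`, with arbitrary nodes `b k` in place of `a ^ k`.
noncomputable def rsGenerator {n : ℕ} (b : Fin n → F) (r : ℕ) (k : Fin n) : F[X] :=
  ∑ i ∈ range (r + 1), C (b k ^ i) * X ^ i

section rsGenerator

variable {n r : ℕ} {b : Fin n → F}

theorem coeff_rsGenerator (k : Fin n) (i : ℕ) :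
    (rsGenerator b r k).coeff i = if i ≤ r then b k ^ i else 0 := by
  simp only [rsGenerator, finsetSum_coeff, coeff_C_mul_X_pow, sum_ite_eq, mem_range,
    Nat.lt_succ_iff]

theorem natDegree_rsGenerator {k : Fin n} (hk : b k ≠ 0) : (rsGenerator b r k).natDegree = r :=
  natDegree_eq_of_le_of_coeff_ne_zero
    (natDegree_le_iff_coeff_eq_zero.2 fun i hi => by simp [coeff_rsGenerator, not_le.2 hi])
    (by rw [coeff_rsGenerator, if_pos le_rfl]; exact pow_ne_zero _ hk)

theorem sum_C_mul_rsGenerator {c : Fin n → F} (hc : ∀ i ≤ r, ∑ k, c k * b k ^ i = 0 ^ i) :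
    ∑ k, C (c k) * rsGenerator b r k = 1 := by
  ext i
  by_cases hi : i ≤ r
  · simp [coeff_rsGenerator, hi, hc i hi, coeff_one, zero_pow_eq]
  · simp [coeff_rsGenerator, hi, coeff_one, show i ≠ 0 by omega]

theorem sup_natDegree_rsGenerator (hn : 0 < n) (hb0 : ∀ k, b k ≠ 0) :
    (univ.sup fun k => (rsGenerator b r k).natDegree) = r := by
  rw [show (fun k => (rsGenerator b r k).natDegree) = fun _ => r from
    funext fun k => natDegree_rsGenerator (hb0 k)]
  exact sup_const (univ_nonempty_iff.2 ⟨⟨0, hn⟩⟩) r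

end rsGenerator

def window (S : Finset ℕ) (r t : ℕ) : Finset ℕ := {s ∈ S | s ≤ t ∧ t ≤ s + r}

theorem card_filter_bridges_add_le (S T : Finset ℕ) {r n : ℕ} (hrn : r < n) (j : ℕ) :
    #{t ∈ T | ∃ s ∈ window S r t, ∃ s' ∈ window S r t, s ≤ j ∧ j < s'} +
      (if (window S r (j + r + 1)).Nonempty then 0 else n) ≤ n := by
  split_ifs with hne
  · have hsub : {t ∈ T | ∃ s ∈ window S r t, ∃ s' ∈ window S r t, s ≤ j ∧ j < s'} ⊆
        Icc (j + 1) (j + r) := by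
      intro t ht
      obtain ⟨-, s, hs, s', hs', hsj, hjs'⟩ := mem_filter.1 ht
      simp only [window, mem_filter] at hs hs'
      exact mem_Icc.2 ⟨by omega, by omega⟩
    have := card_le_card hsub
    rw [Nat.card_Icc] at this
    omega
  · suffices {t ∈ T | ∃ s ∈ window S r t, ∃ s' ∈ window S r t, s ≤ j ∧ j < s'} = ∅ by
      simp [this]
    refine filter_eq_empty_iff.2 fun t _ ⟨s, hs, s', hs', hsj, hjs'⟩ => hne ⟨s', ?_⟩
    simp only [window, mem_filter] at hs hs' ⊢
    exact ⟨hs'.1, by omega, by omega⟩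

theorem sum_window_defect_le (S : Finset ℕ) {v m r n : ℕ} (hv : v ∈ S) (hm : m ∈ S)
    (hrn : r < n) :
    ∑ t ∈ Icc v (m + r), (if (window S r t).Nonempty then
      #{j ∈ Ico v m | ∃ s ∈ window S r t, ∃ s' ∈ window S r t, s ≤ j ∧ j < s'} else n) ≤
      n * (m - v) := by
  set Bridges : ℕ → ℕ → Prop :=
    fun t j => ∃ s ∈ window S r t, ∃ s' ∈ window S r t, s ≤ j ∧ j < s'
  set gap : ℕ → ℕ := fun t => if (window S r t).Nonempty then 0 else n
  have hgap : ∑ t ∈ Icc v (m + r), gap t ≤ ∑ j ∈ Ico v m, gap (j + (r + 1)) := by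
    rw [sum_Ico_add']
    refine sum_le_sum_of_ne_zero fun t ht hgt => ?_
    have hempty : ¬(window S r t).Nonempty := fun h => hgt (if_pos h)
    rw [mem_Icc] at ht
    have hvt : ¬t ≤ v + r := fun h => hempty ⟨v, by simp [window, hv, ht.1, h]⟩
    have hmt : ¬m ≤ t := fun h => hempty ⟨m, by simp [window, hm, h, ht.2]⟩
    exact mem_Ico.2 ⟨by omega, by omega⟩
  calc ∑ t ∈ Icc v (m + r),
        (if (window S r t).Nonempty then #{j ∈ Ico v m | Bridges t j} else n)
      ≤ ∑ t ∈ Icc v (m + r), (#{j ∈ Ico v m | Bridges t j} + gap t) :=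
        sum_le_sum fun t _ => by simp only [gap]; split_ifs <;> simp
    _ ≤ ∑ j ∈ Ico v m, #{t ∈ Icc v (m + r) | Bridges t j} +
          ∑ j ∈ Ico v m, gap (j + (r + 1)) := by
        rw [sum_add_distrib]
        exact add_le_add (sum_card_bipartiteAbove_eq_sum_card_bipartiteBelow _).le hgap
    _ ≤ ∑ j ∈ Ico v m, n := by
        rw [← sum_add_distrib]
        exact sum_le_sum fun j _ => card_filter_bridges_add_le S _ hrn j
    _ = n * (m - v) := by rw [sum_const, Nat.card_Ico, smul_eq_mul, mul_comm]

/-- The polynomial in `y` whose value at `b` is the coefficient of `z ^ t` in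
`q(z) (1 + bz + ⋯ + (bz) ^ r)`. -/
noncomputable def windowPoly (q : F[X]) (r t : ℕ) : F[X] :=
  ∑ i ∈ range (r + 1), C ((q * X ^ i).coeff t) * X ^ i

theorem coeff_windowPoly (q : F[X]) (r t i : ℕ) :
    (windowPoly q r t).coeff i = if i ≤ r ∧ i ≤ t then q.coeff (t - i) else 0 := by
  simp only [windowPoly, finsetSum_coeff, coeff_C_mul_X_pow]
  rw [sum_ite_eq]
  simp only [mem_range, Nat.lt_succ_iff, coeff_mul_X_pow', ite_and]

theorem eval_windowPoly {n : ℕ} (q : F[X]) (b : Fin n → F) (r t : ℕ) (k : Fin n) :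
    (windowPoly q r t).eval (b k) = (q * rsGenerator b r k).coeff t := by
  simp only [windowPoly, rsGenerator, eval_finsetSum, eval_mul, eval_C, eval_pow, eval_X,
    mul_sum, finsetSum_coeff]
  refine sum_congr rfl fun i _ => ?_
  rw [mul_left_comm, coeff_C_mul, mul_comm]

section Weight

variable [DecidableEq F]

theorem card_filter_eval_eq_zero_le {ι : Type*} [Fintype ι] {p : F[X]}
    (hp : p ≠ 0) {b : ι → F} (hb : Function.Injective b) (hb0 : ∀ k, b k ≠ 0) :
    #{k | p.eval (b k) = 0} ≤ p.natDegree - p.natTrailingDegree := by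
  have hroots : p.natTrailingDegree + Multiset.card (p.roots.filter (· ≠ 0)) ≤ p.natDegree := by
    have hsplit := congrArg Multiset.card (Multiset.filter_add_not (· = 0) p.roots)
    rw [Multiset.card_add, Multiset.filter_eq', Multiset.card_replicate, count_roots,
      rootMultiplicity_eq_natTrailingDegree'] at hsplit
    exact hsplit.trans_le (card_roots' p)
  calc #{k | p.eval (b k) = 0}
      ≤ (p.roots.filter (· ≠ 0)).toFinset.card := by
        refine card_le_card_of_injOn b (fun k hk => ?_) hb.injOn
        simp only [coe_filter, mem_univ, true_and, Set.mem_ofPred_eq] at hk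
        simp [mem_roots hp, hk, hb0 k]
    _ ≤ Multiset.card (p.roots.filter (· ≠ 0)) := Multiset.toFinset_card_le _
    _ ≤ p.natDegree - p.natTrailingDegree := by omega

theorem card_filter_eval_windowPoly_eq_zero_le {n : ℕ} {q : F[X]}
    {b : Fin n → F} (hb : Function.Injective b) (hb0 : ∀ k, b k ≠ 0) {r t : ℕ}
    (ht : (window q.support r t).Nonempty) :
    #{k | (windowPoly q r t).eval (b k) = 0} ≤ #{j ∈ Ico q.natTrailingDegree q.natDegree |
      ∃ s ∈ window q.support r t, ∃ s' ∈ window q.support r t, s ≤ j ∧ j < s'} := by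
  set P := windowPoly q r t with hP_def
  have mem_window {i : ℕ} (hi : P.coeff i ≠ 0) : t - i ∈ window q.support r t ∧ i ≤ t := by
    rw [coeff_windowPoly] at hi
    have hit : i ≤ r ∧ i ≤ t := by
      by_contra h
      simp [h] at hi
    rw [if_pos hit] at hi
    simp only [window, mem_filter, mem_support_iff]
    exact ⟨⟨hi, by omega, by omega⟩, hit.2⟩
  have hP : P ≠ 0 := by
    obtain ⟨s, hs⟩ := ht
    simp only [window, mem_filter, mem_support_iff] at hs
    refine fun h => hs.1 ?_
    have := coeff_windowPoly q r t (t - s)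
    rwa [← hP_def, h, coeff_zero, if_pos (by omega), show t - (t - s) = s by omega,
      eq_comm] at this
  obtain ⟨hd, hdt⟩ := mem_window (mt leadingCoeff_eq_zero.1 hP)
  obtain ⟨he, -⟩ := mem_window (mt trailingCoeff_eq_zero.1 hP)
  have hed : P.natTrailingDegree ≤ P.natDegree := natTrailingDegree_le_natDegree P
  calc #{k | P.eval (b k) = 0}
      ≤ P.natDegree - P.natTrailingDegree := card_filter_eval_eq_zero_le hP hb hb0
    _ = #(Ico (t - P.natDegree) (t - P.natTrailingDegree)) := by rw [Nat.card_Ico]; omega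
    _ ≤ _ := by
      refine card_le_card fun j hj => ?_
      obtain ⟨hdj, hje⟩ := mem_Ico.1 hj
      have hv := natTrailingDegree_le_of_ne_zero (mem_support_iff.1 (mem_filter.1 hd).1)
      have hm := le_natDegree_of_ne_zero (mem_support_iff.1 (mem_filter.1 he).1)
      exact mem_filter.2 ⟨mem_Ico.2 ⟨hv.trans hdj, hje.trans_le hm⟩, _, hd, _, he, hdj, hje⟩

theorem sum_hammingNorm_coeff_le_polyWeight {n : ℕ} (x : Fin n → F[X]) (s : Finset ℕ) :
    ∑ t ∈ s, hammingNorm (fun i => (x i).coeff t) ≤ polyWeight x := by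
  refine sum_le_sum_of_ne_zero fun t _ ht => mem_range.2 (Nat.lt_succ_of_le ?_)
  obtain ⟨i, hi⟩ : ∃ i, (x i).coeff t ≠ 0 := by
    by_contra! h
    exact ht (hammingNorm_eq_zero.2 (funext h : (fun i => (x i).coeff t) = 0))
  exact (le_natDegree_of_ne_zero hi).trans (le_sup (f := fun i => (x i).natDegree) (mem_univ i))

theorem polyWeight_le {n : ℕ} (x : Fin n → F[X]) :
    polyWeight x ≤ n * ((univ.sup fun i => (x i).natDegree) + 1) := by
  have := sum_le_card_nsmul (range ((univ.sup fun i => (x i).natDegree) + 1))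
    (fun t => hammingNorm fun i => (x i).coeff t) n fun t _ =>
      hammingNorm_le_card_fintype.trans_eq (Fintype.card_fin n)
  rwa [card_range, smul_eq_mul, mul_comm] at this

theorem mul_succ_le_polyWeight_mul_rsGenerator {n r : ℕ} (hrn : r < n)
    {b : Fin n → F} (hb : Function.Injective b) (hb0 : ∀ k, b k ≠ 0) {q : F[X]} (hq : q ≠ 0) :
    n * (r + 1) ≤ polyWeight fun k => q * rsGenerator b r k := by
  set v := q.natTrailingDegree
  set m := q.natDegree
  set zeros : ℕ → ℕ := fun t => #{k | (windowPoly q r t).eval (b k) = 0}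
  have hsplit (t : ℕ) :
      hammingNorm (fun k => (q * rsGenerator b r k).coeff t) + zeros t = n := by
    simp only [hammingNorm, zeros, eval_windowPoly]
    rw [add_comm, card_filter_add_card_filter_not, card_univ, Fintype.card_fin]
  have hzeros : ∑ t ∈ Icc v (m + r), zeros t ≤ n * (m - v) := by
    refine (sum_le_sum fun t _ => ?_).trans (sum_window_defect_le q.support
      (natTrailingDegree_mem_support_of_nonzero hq) (natDegree_mem_support_of_nonzero hq) hrn)
    split_ifs with ht
    · exact card_filter_eval_windowPoly_eq_zero_le hb hb0 ht
    · exact (card_filter_le _ _).trans_eq (card_fin n)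
  have htotal : ∑ t ∈ Icc v (m + r), hammingNorm (fun k => (q * rsGenerator b r k).coeff t) +
      ∑ t ∈ Icc v (m + r), zeros t = n * (r + 1) + n * (m - v) := by
    rw [← sum_add_distrib, sum_congr rfl fun t _ => hsplit t, sum_const, Nat.card_Icc,
      smul_eq_mul, ← mul_add, mul_comm]
    congr 1
    have := natTrailingDegree_le_natDegree q
    omega
  have := sum_hammingNorm_coeff_le_polyWeight (fun k => q * rsGenerator b r k) (Icc v (m + r))
  omega

end Weight

end

theorem Gluesing_Langfeld_codes_MDS_general
    {F : Type*} [Field F] [DecidableEq F]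
    (n r : ℕ) (hrn : r < n)
    -- a ∈ F_q^× has multiplicative order at least n
    (a : F) (ha : a ≠ 0) (horder : n ≤ orderOf a)
    -- G(z) = Σ_{i=0}^{r} z^i · ( 1, a^i, a^{2i}, …, a^{(n−1)i} )
    (Gpoly : Fin n → Polynomial F)
    (hG : ∀ k : Fin n, Gpoly k =
      ∑ i ∈ Finset.range (r + 1), Polynomial.C (a ^ ((k : ℕ) * i)) * Polynomial.X ^ i) :
    -- G(z) is a generator matrix (rank 1) of C = F_q(z)·G(z) …
    Gpoly ≠ 0 ∧
    -- … which is basic: F_q[z]^n / (F_q[z]-row span of G) is free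
    Module.Free (Polynomial F)
      ((Fin n → Polynomial F) ⧸ Submodule.span (Polynomial F) {Gpoly}) ∧
    -- C has degree r (the max degree of the 1×1 minors of the basic matrix G)
    (Finset.univ.sup fun i => (Gpoly i).natDegree) = r ∧
    -- the free distance of C equals n(r+1), the generalized Singleton bound for (n,1,r):
    -- hence C is an MDS convolutional code
    IsLeast { w : ℕ | ∃ x : Fin n → Polynomial F,
        liftVec x ∈ Submodule.span (RatFunc F) {liftVec Gpoly} ∧ x ≠ 0 ∧ polyWeight x = w }
      (n * (r + 1)) := by
  have hb : Function.Injective fun k : Fin n => a ^ (k : ℕ) := fun i j hij =>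
    Fin.ext (pow_injOn_Iio_orderOf (i.2.trans_le horder) (j.2.trans_le horder) hij)
  have hb0 (k : Fin n) : a ^ (k : ℕ) ≠ 0 := pow_ne_zero _ ha
  obtain rfl : Gpoly = rsGenerator (fun k => a ^ (k : ℕ)) r :=
    funext fun k => by simp only [hG, rsGenerator, pow_mul]
  obtain ⟨c, hc⟩ := exists_sum_mul_pow_eq_zero_pow hrn hb
  have hbezout := sum_C_mul_rsGenerator hc
  have hsup := sup_natDegree_rsGenerator (r := r) (by omega) hb0
  have hG0 : rsGenerator (fun k : Fin n => a ^ (k : ℕ)) r ≠ 0 := fun h => by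
    simp [h] at hbezout
  have hweight (q : F[X]) (hq : q ≠ 0) := mul_succ_le_polyWeight_mul_rsGenerator hrn hb hb0 hq
  refine ⟨hG0, Module.free_quotient_span_singleton_of_eq_one (∑ k, C (c k) • LinearMap.proj k)
    (by simpa using hbezout), hsup, ⟨_, Submodule.mem_span_singleton_self _, hG0, ?_⟩, ?_⟩
  · exact le_antisymm ((polyWeight_le _).trans_eq (by rw [hsup]))
      (by simpa using hweight 1 one_ne_zero)
  · rintro w ⟨x, hx, hx0, rfl⟩
    rw [eq_smul_of_liftVec_mem_span hbezout hx] at hx0 ⊢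
    exact hweight _ (left_ne_zero_of_smul hx0)

theorem Gluesing_Langfeld_codes_MDS
    {F : Type*} [Field F] [Fintype F] [DecidableEq F]
    (n r : ℕ) (hrn : r < n)
    -- a ∈ F_q^× has multiplicative order at least n
    (a : F) (ha : a ≠ 0) (horder : n ≤ orderOf a)
    -- G(z) = Σ_{i=0}^{r} z^i · ( 1, a^i, a^{2i}, …, a^{(n−1)i} )
    (Gpoly : Fin n → Polynomial F)
    (hG : ∀ k : Fin n, Gpoly k =
      ∑ i ∈ Finset.range (r + 1), Polynomial.C (a ^ ((k : ℕ) * i)) * Polynomial.X ^ i) :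
    -- G(z) is a generator matrix (rank 1) of C = F_q(z)·G(z) …
    Gpoly ≠ 0 ∧
    -- … which is basic: F_q[z]^n / (F_q[z]-row span of G) is free
    Module.Free (Polynomial F)
      ((Fin n → Polynomial F) ⧸ Submodule.span (Polynomial F) {Gpoly}) ∧
    -- C has degree r (the max degree of the 1×1 minors of the basic matrix G)
    (Finset.univ.sup fun i => (Gpoly i).natDegree) = r ∧
    -- the free distance of C equals n(r+1), the generalized Singleton bound for (n,1,r):
    -- hence C is an MDS convolutional code
    IsLeast { w : ℕ | ∃ x : Fin n → Polynomial F,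
        liftVec x ∈ Submodule.span (RatFunc F) {liftVec Gpoly} ∧ x ≠ 0 ∧ polyWeight x = w }
      (n * (r + 1)) :=
  Gluesing_Langfeld_codes_MDS_general n r hrn a ha horder Gpoly hG
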